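/- arXiv:2509.11422 — 7 statements merged into one kernel-verified Lean document; each statement's English description precedes it below -/
import Mathlib

section
/- Let V and W be finite-dimensional real normed vector spaces and let Ā : V → W be an injective continuous linear map. Then there exist constants C > 0 and δ > 0 such that for all continuous linear maps A, B : V → W with ‖A − Ā‖ ≤ δ and ‖B − Ā‖ ≤ δ, one has d(Im A, Im B) ≤ C · ‖A − B‖. -/
/-- The distance between two linear subspaces `V` and `W` of a normed space:
`d(V, W) = sup { dist(v, W) : v ∈ V, ‖v‖ = 1 }`, with the convention that the
supremum of the empty set is `0` (so `d(V, W) = 0` when `V = {0}`). -/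
noncomputable def subspaceDist {E : Type*} [NormedAddCommGroup E] [NormedSpace ℝ E]
    (V W : Submodule ℝ E) : ℝ :=
  sSup ((fun v => Metric.infDist v (W : Set E)) '' {v : E | v ∈ V ∧ ‖v‖ = 1})

/-! Injectivity on a finite-dimensional space gives a bound `c ‖x‖ ≤ ‖Abar x‖` with `c > 0`, and
this bound survives, halved, for every `A` within `c / 2` of `Abar`. So a unit vector `A x` of
`Im A` has `‖x‖ ≤ 2 / c`, and its distance to `B x ∈ Im B` is at most `(2 / c) ‖A - B‖`. -/

open Metric

theorem ContinuousLinearMap.half_mul_norm_le_of_opNorm_sub_le {𝕜 E F : Type*}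
    [NontriviallyNormedField 𝕜] [SeminormedAddCommGroup E] [NormedSpace 𝕜 E]
    [SeminormedAddCommGroup F] [NormedSpace 𝕜 F] {A Abar : E →L[𝕜] F} {c : ℝ}
    (hAbar : ∀ x, c * ‖x‖ ≤ ‖Abar x‖) (hA : ‖A - Abar‖ ≤ c / 2) (x : E) :
    c / 2 * ‖x‖ ≤ ‖A x‖ := by
  have : c * ‖x‖ ≤ ‖A x‖ + c / 2 * ‖x‖ :=
    calc c * ‖x‖ ≤ ‖Abar x‖ := hAbar x
      _ = ‖A x - (A - Abar) x‖ := by simp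
      _ ≤ ‖A x‖ + ‖(A - Abar) x‖ := norm_sub_le _ _
      _ ≤ ‖A x‖ + c / 2 * ‖x‖ := by gcongr; exact (A - Abar).le_of_opNorm_le hA x
  linarith

theorem subspaceDist_range_le {V W : Type*} [NormedAddCommGroup V] [NormedSpace ℝ V]
    [NormedAddCommGroup W] [NormedSpace ℝ W] {A B : V →L[ℝ] W} {c : ℝ} (hc : 0 < c)
    (hA : ∀ x, c * ‖x‖ ≤ ‖A x‖) :
    subspaceDist (LinearMap.range (A : V →ₗ[ℝ] W)) (LinearMap.range (B : V →ₗ[ℝ] W)) ≤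
      c⁻¹ * ‖A - B‖ := by
  refine Real.sSup_le ?_ (by positivity)
  rintro _ ⟨_, ⟨⟨x, rfl⟩, hAx⟩, rfl⟩
  have hx : ‖x‖ ≤ c⁻¹ := by
    simpa using (le_inv_mul_iff₀ hc).2 (hAx ▸ hA x : c * ‖x‖ ≤ 1)
  calc infDist (A x) (LinearMap.range (B : V →ₗ[ℝ] W)) ≤ dist (A x) (B x) :=
        infDist_le_dist_of_mem ⟨x, rfl⟩
    _ = ‖(A - B) x‖ := dist_eq_norm _ _
    _ ≤ ‖A - B‖ * ‖x‖ := (A - B).le_opNorm x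
    _ ≤ ‖A - B‖ * c⁻¹ := by gcongr
    _ = c⁻¹ * ‖A - B‖ := mul_comm _ _

theorem stmt_0_general {V W : Type*} [NormedAddCommGroup V] [NormedSpace ℝ V]
    [NormedAddCommGroup W] [NormedSpace ℝ W]
    [FiniteDimensional ℝ V]
    (Abar : V →L[ℝ] W) (hinj : Function.Injective Abar) :
    ∃ C > (0 : ℝ), ∃ δ > (0 : ℝ), ∀ A B : V →L[ℝ] W,
      ‖A - Abar‖ ≤ δ → ‖B - Abar‖ ≤ δ →
      subspaceDist (LinearMap.range (A : V →ₗ[ℝ] W)) (LinearMap.range (B : V →ₗ[ℝ] W)) ≤ C * ‖A - B‖ := by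
  obtain ⟨K, -, hK⟩ := (Abar : V →ₗ[ℝ] W).exists_antilipschitzWith (LinearMap.ker_eq_bot.2 hinj)
  obtain ⟨c, hc, hAbar⟩ := antilipschitzWith_iff_exists_mul_le_norm.1 ⟨K, hK⟩
  refine ⟨(c / 2)⁻¹, by positivity, c / 2, by positivity, fun A B hA _ => ?_⟩
  exact subspaceDist_range_le (by positivity) (A.half_mul_norm_le_of_opNorm_sub_le hAbar hA)

theorem stmt_0 {V W : Type*} [NormedAddCommGroup V] [NormedSpace ℝ V]
    [NormedAddCommGroup W] [NormedSpace ℝ W]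
    [FiniteDimensional ℝ V] [FiniteDimensional ℝ W]
    (Abar : V →L[ℝ] W) (hinj : Function.Injective Abar) :
    ∃ C > (0 : ℝ), ∃ δ > (0 : ℝ), ∀ A B : V →L[ℝ] W,
      ‖A - Abar‖ ≤ δ → ‖B - Abar‖ ≤ δ →
      subspaceDist (LinearMap.range (A : V →ₗ[ℝ] W)) (LinearMap.range (B : V →ₗ[ℝ] W)) ≤ C * ‖A - B‖ :=
  stmt_0_general Abar hinj
end

section
/- Let V and W be finite-dimensional real normed vector spaces with V ≠ {0}, let Ā : V → W be an injective continuous linear map, and set c = inf { ‖Ā x‖ : ‖x‖ = 1 }, so that c > 0. If a continuous linear map A : V → W satisfies ‖A − Ā‖ ≤ c/2, then for every continuous linear map B : V → W one has d(Im A, Im B) ≤ (2/c) · ‖A − B‖. -/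
noncomputable def minModulus {E F : Type*} [NormedAddCommGroup E] [NormedSpace ℝ E]
    [NormedAddCommGroup F] [NormedSpace ℝ F] (f : E →L[ℝ] F) : ℝ :=
  sInf ((fun x => ‖f x‖) '' {x : E | ‖x‖ = 1})

section

variable {E F : Type*} [NormedAddCommGroup E] [NormedSpace ℝ E]
  [NormedAddCommGroup F] [NormedSpace ℝ F]

theorem minModulus_mul_norm_le (f : E →L[ℝ] F) (x : E) : minModulus f * ‖x‖ ≤ ‖f x‖ := by
  rcases eq_or_ne x 0 with rfl | hx
  · simp
  have hnx : 0 < ‖x‖ := norm_pos_iff.mpr hx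
  have hunit : ‖‖x‖⁻¹ • x‖ = 1 := by
    rw [norm_smul, norm_inv, norm_norm, inv_mul_cancel₀ hnx.ne']
  have hbdd : BddBelow ((fun x => ‖f x‖) '' {x : E | ‖x‖ = 1}) :=
    ⟨0, by rintro _ ⟨y, -, rfl⟩; exact norm_nonneg _⟩
  have hle : minModulus f ≤ ‖x‖⁻¹ * ‖f x‖ := by
    have : minModulus f ≤ ‖f (‖x‖⁻¹ • x)‖ := csInf_le hbdd ⟨_, hunit, rfl⟩
    rwa [map_smul, norm_smul, norm_inv, norm_norm] at this
  rwa [← le_div_iff₀ hnx, div_eq_inv_mul]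

theorem minModulus_pos [FiniteDimensional ℝ E] [Nontrivial E] {f : E →L[ℝ] F}
    (hf : Function.Injective f) : 0 < minModulus f := by
  have hsphere : {x : E | ‖x‖ = 1} = Metric.sphere 0 1 := by ext; simp
  have hne : {x : E | ‖x‖ = 1}.Nonempty := hsphere ▸ NormedSpace.sphere_nonempty.mpr zero_le_one
  have hcpt : IsCompact {x : E | ‖x‖ = 1} := hsphere ▸ isCompact_sphere 0 1
  obtain ⟨y, hy, hmin⟩ :=
    (hcpt.image (continuous_norm.comp f.continuous)).sInf_mem (hne.image _)
  have hy0 : y ≠ 0 := by rintro rfl; simp at hy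
  have hfy : 0 < ‖f y‖ := norm_pos_iff.mpr fun h => hy0 (hf (h.trans (map_zero f).symm))
  exact hfy.trans_eq hmin

theorem sub_mul_norm_le_norm_apply {f g : E →L[ℝ] F} {m ε : ℝ}
    (hf : ∀ x, m * ‖x‖ ≤ ‖f x‖) (hg : ‖g - f‖ ≤ ε) (x : E) : (m - ε) * ‖x‖ ≤ ‖g x‖ := by
  have hdiff : ‖f x‖ - ‖g x‖ ≤ ε * ‖x‖ :=
    calc ‖f x‖ - ‖g x‖ ≤ ‖f x - g x‖ := norm_sub_norm_le _ _
      _ = ‖(g - f) x‖ := by rw [norm_sub_rev]; rfl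
      _ ≤ ‖g - f‖ * ‖x‖ := (g - f).le_opNorm x
      _ ≤ ε * ‖x‖ := by gcongr
  linarith [hf x]

theorem subspaceDist_range_le_s1 {A B : E →L[ℝ] F} {m : ℝ} (hm : 0 < m)
    (hA : ∀ x, m * ‖x‖ ≤ ‖A x‖) :
    subspaceDist (LinearMap.range (A : E →ₗ[ℝ] F)) (LinearMap.range (B : E →ₗ[ℝ] F)) ≤
      m⁻¹ * ‖A - B‖ := by
  refine Real.sSup_le ?_ (by positivity)
  rintro _ ⟨_, ⟨⟨x, rfl⟩, hAx⟩, rfl⟩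
  have hx : ‖x‖ ≤ m⁻¹ := by
    rw [← one_div, le_div_iff₀ hm, mul_comm]
    exact (hA x).trans_eq hAx
  calc Metric.infDist (A x) (LinearMap.range (B : E →ₗ[ℝ] F))
      ≤ dist (A x) (B x) := Metric.infDist_le_dist_of_mem ⟨x, rfl⟩
    _ = ‖(A - B) x‖ := dist_eq_norm _ _
    _ ≤ ‖A - B‖ * ‖x‖ := (A - B).le_opNorm x
    _ ≤ ‖A - B‖ * m⁻¹ := by gcongr
    _ = m⁻¹ * ‖A - B‖ := mul_comm _ _

end

theorem stmt_1_general {V W : Type*} [NormedAddCommGroup V] [NormedSpace ℝ V]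
    [NormedAddCommGroup W] [NormedSpace ℝ W]
    [FiniteDimensional ℝ V] [Nontrivial V]
    (Abar : V →L[ℝ] W) (hinj : Function.Injective Abar)
    (c : ℝ) (hc : c = sInf ((fun x => ‖Abar x‖) '' {x : V | ‖x‖ = 1})) :
    0 < c ∧ ∀ A : V →L[ℝ] W, ‖A - Abar‖ ≤ c / 2 → ∀ B : V →L[ℝ] W,
      subspaceDist (LinearMap.range (A : V →ₗ[ℝ] W)) (LinearMap.range (B : V →ₗ[ℝ] W)) ≤ (2 / c) * ‖A - B‖ := by
  obtain rfl : c = minModulus Abar := hc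
  refine ⟨minModulus_pos hinj, fun A hA B => ?_⟩
  have hAlow := sub_mul_norm_le_norm_apply (minModulus_mul_norm_le Abar) hA
  rw [sub_half] at hAlow
  simpa only [inv_div] using subspaceDist_range_le_s1 (half_pos (minModulus_pos hinj)) hAlow

theorem stmt_1 {V W : Type*} [NormedAddCommGroup V] [NormedSpace ℝ V]
    [NormedAddCommGroup W] [NormedSpace ℝ W]
    [FiniteDimensional ℝ V] [FiniteDimensional ℝ W] [Nontrivial V]
    (Abar : V →L[ℝ] W) (hinj : Function.Injective Abar)
    (c : ℝ) (hc : c = sInf ((fun x => ‖Abar x‖) '' {x : V | ‖x‖ = 1})) :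
    0 < c ∧ ∀ A : V →L[ℝ] W, ‖A - Abar‖ ≤ c / 2 → ∀ B : V →L[ℝ] W,
      subspaceDist (LinearMap.range (A : V →ₗ[ℝ] W)) (LinearMap.range (B : V →ₗ[ℝ] W)) ≤ (2 / c) * ‖A - B‖ :=
  stmt_1_general Abar hinj c hc
end

section
/- Let E and F be finite-dimensional real inner product spaces, let U be an open neighborhood of a point x̄ in E, and let Φ : U → F be a C² map whose derivative DΦ(x̄) : E → F is surjective. Then there exist a constant C > 0 and a neighborhood U' ⊆ U of x̄ such that for all x, y ∈ U', d(ker DΦ(x), ker DΦ(y)) ≤ C · ‖x − y‖. -/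
/-! The derivative `A = DΦ` is `C¹`, hence Lipschitz near `x̄`. A right inverse `B` of `A x̄`
perturbs, via a Neumann series for `A z ∘ B`, to right inverses `R_z` of `A z` whose norms are
uniformly bounded near `x̄`. For `v ∈ ker A x` the vector `v - R_y (A y v)` lies in `ker A y`, and
`A y v = (A y - A x) v`, so `dist(v, ker A y) ≤ ‖R_y‖ ‖A y - A x‖ ‖v‖ = O(‖x - y‖)` for unit `v`. -/

open Filter Topology

section RightInverse

variable {𝕜 E F : Type*} [NontriviallyNormedField 𝕜]
  [NormedAddCommGroup E] [NormedSpace 𝕜 E] [NormedAddCommGroup F] [NormedSpace 𝕜 F]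

theorem infDist_ker_le_of_comp_eq_id {S T : E →L[𝕜] F} {R : F →L[𝕜] E}
    (hR : S.comp R = .id 𝕜 F) {v : E} (hv : T v = 0) :
    Metric.infDist v (LinearMap.ker (S : E →ₗ[𝕜] F) : Set E) ≤ ‖R‖ * ‖S - T‖ * ‖v‖ := by
  have hmem : v - R (S v) ∈ LinearMap.ker (S : E →ₗ[𝕜] F) := by
    simpa [sub_eq_zero] using congr($hR (S v)).symm
  calc Metric.infDist v (LinearMap.ker (S : E →ₗ[𝕜] F) : Set E)
      ≤ dist v (v - R (S v)) := Metric.infDist_le_dist_of_mem hmem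
    _ = ‖R ((S - T) v)‖ := by simp [hv]
    _ ≤ ‖R‖ * ‖S - T‖ * ‖v‖ := by
      rw [mul_assoc]
      exact R.le_opNorm_of_le ((S - T).le_opNorm v)

theorem ContinuousLinearMap.exists_rightInverse_of_norm_sub_comp_le [CompleteSpace F]
    {A₀ A : E →L[𝕜] F} {B : F →L[𝕜] E} (hB : A₀.comp B = .id 𝕜 F)
    (h : ‖(A₀ - A).comp B‖ ≤ 1 / 2) :
    ∃ R : F →L[𝕜] E, A.comp R = .id 𝕜 F ∧ ‖R‖ ≤ 2 * ‖B‖ := by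
  set T := (A₀ - A).comp B
  have hT : ‖T‖ < 1 := h.trans_lt (by norm_num)
  have hAB : A.comp B = 1 - T := by
    simp [T, ContinuousLinearMap.sub_comp, hB, ContinuousLinearMap.one_def]
  set S := ∑' n : ℕ, T ^ n
  have hS : ‖S‖ ≤ 2 := by
    have hinv : (1 - ‖T‖)⁻¹ ≤ 2 := by
      rw [inv_le_comm₀ (by linarith) (by norm_num)]
      linarith
    have hone : ‖(1 : F →L[𝕜] F)‖ ≤ 1 := ContinuousLinearMap.norm_id_le
    linarith [tsum_geometric_le_of_norm_lt_one T hT]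
  refine ⟨B.comp S, ?_, ?_⟩
  · rw [← ContinuousLinearMap.comp_assoc, hAB]
    exact mul_neg_geom_series T hT
  · calc ‖B.comp S‖ ≤ ‖B‖ * ‖S‖ := B.opNorm_comp_le S
      _ ≤ 2 * ‖B‖ := by nlinarith [norm_nonneg B]

theorem ContinuousAt.eventually_exists_rightInverse_norm_le [CompleteSpace 𝕜]
    [FiniteDimensional 𝕜 F] {X : Type*} [TopologicalSpace X] {A : X → E →L[𝕜] F} {x₀ : X}
    (hA : ContinuousAt A x₀) (hsurj : Function.Surjective (A x₀)) :
    ∃ M > 0, ∀ᶠ x in 𝓝 x₀, ∃ R : F →L[𝕜] E, (A x).comp R = .id 𝕜 F ∧ ‖R‖ ≤ M := by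
  have : CompleteSpace F := FiniteDimensional.complete 𝕜 F
  obtain ⟨B, hB⟩ := (A x₀).exists_rightInverse_of_surjective (LinearMap.range_eq_top.2 hsurj)
  have hsmall : ∀ᶠ x in 𝓝 x₀, ‖(A x₀ - A x).comp B‖ < 1 / 2 := by
    have : ContinuousAt (fun x => ‖(A x₀ - A x).comp B‖) x₀ :=
      ((continuousAt_const.sub hA).clm_comp continuousAt_const).norm
    exact this.eventually_lt continuousAt_const (by simp)
  refine ⟨2 * ‖B‖ + 1, by positivity, hsmall.mono fun x hx => ?_⟩
  obtain ⟨R, hR, hRB⟩ := ContinuousLinearMap.exists_rightInverse_of_norm_sub_comp_le hB hx.le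
  exact ⟨R, hR, by linarith⟩

end RightInverse

theorem subspaceDist_ker_le_of_comp_eq_id {E F : Type*} [NormedAddCommGroup E] [NormedSpace ℝ E]
    [NormedAddCommGroup F] [NormedSpace ℝ F] {S T : E →L[ℝ] F} {R : F →L[ℝ] E}
    (hR : S.comp R = .id ℝ F) :
    subspaceDist (LinearMap.ker (T : E →ₗ[ℝ] F)) (LinearMap.ker (S : E →ₗ[ℝ] F)) ≤
      ‖R‖ * ‖S - T‖ := by
  refine Real.sSup_le ?_ (by positivity)
  rintro _ ⟨v, ⟨hv, hv1⟩, rfl⟩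
  simpa [hv1] using infDist_ker_le_of_comp_eq_id hR hv

theorem stmt_2_general {E F : Type*}
    [NormedAddCommGroup E] [InnerProductSpace ℝ E]
    [NormedAddCommGroup F] [InnerProductSpace ℝ F] [FiniteDimensional ℝ F]
    (U : Set E) (hU : IsOpen U) (xbar : E) (hxbar : xbar ∈ U)
    (Φ : E → F) (hΦ : ContDiffOn ℝ 2 Φ U)
    (hsurj : Function.Surjective (fderiv ℝ Φ xbar)) :
    ∃ C > (0 : ℝ), ∃ U' ⊆ U, IsOpen U' ∧ xbar ∈ U' ∧ ∀ x ∈ U', ∀ y ∈ U',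
      subspaceDist (LinearMap.ker (fderiv ℝ Φ x : E →ₗ[ℝ] F)) (LinearMap.ker (fderiv ℝ Φ y : E →ₗ[ℝ] F))
        ≤ C * ‖x - y‖ := by
  have hA : ContDiffAt ℝ 1 (fderiv ℝ Φ) xbar :=
    (hΦ.fderiv_of_isOpen hU (by norm_num)).contDiffAt (hU.mem_nhds hxbar)
  obtain ⟨K, t, ht, hlip⟩ := hA.exists_lipschitzOnWith
  obtain ⟨M, hM, hinv⟩ := hA.continuousAt.eventually_exists_rightInverse_norm_le hsurj
  obtain ⟨U', hU'sub, hU'open, hxU'⟩ :=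
    mem_nhds_iff.1 (Eventually.and (hU.mem_nhds hxbar) (Eventually.and ht hinv))
  refine ⟨M * (K + 1), by positivity, U', fun z hz => (hU'sub hz).1, hU'open, hxU',
    fun x hx y hy => ?_⟩
  obtain ⟨R, hR, hRM⟩ := (hU'sub hy).2.2
  have hxy : ‖fderiv ℝ Φ y - fderiv ℝ Φ x‖ ≤ K * ‖x - y‖ := by
    rw [norm_sub_rev x y]
    exact hlip.norm_sub_le (hU'sub hy).2.1 (hU'sub hx).2.1
  calc _ ≤ ‖R‖ * ‖fderiv ℝ Φ y - fderiv ℝ Φ x‖ := subspaceDist_ker_le_of_comp_eq_id hR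
    _ ≤ M * (K * ‖x - y‖) := by gcongr
    _ ≤ M * (K + 1) * ‖x - y‖ := by nlinarith [norm_nonneg (x - y)]

theorem stmt_2 {E F : Type*}
    [NormedAddCommGroup E] [InnerProductSpace ℝ E] [FiniteDimensional ℝ E]
    [NormedAddCommGroup F] [InnerProductSpace ℝ F] [FiniteDimensional ℝ F]
    (U : Set E) (hU : IsOpen U) (xbar : E) (hxbar : xbar ∈ U)
    (Φ : E → F) (hΦ : ContDiffOn ℝ 2 Φ U)
    (hsurj : Function.Surjective (fderiv ℝ Φ xbar)) :
    ∃ C > (0 : ℝ), ∃ U' ⊆ U, IsOpen U' ∧ xbar ∈ U' ∧ ∀ x ∈ U', ∀ y ∈ U',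
      subspaceDist (LinearMap.ker (fderiv ℝ Φ x : E →ₗ[ℝ] F)) (LinearMap.ker (fderiv ℝ Φ y : E →ₗ[ℝ] F))
        ≤ C * ‖x - y‖ :=
  stmt_2_general U hU xbar hxbar Φ hΦ hsurj
end

section
/- Let G be a Lie group acting smoothly on ℝⁿ, and suppose the action is free at x̄ ∈ ℝⁿ, i.e., the stabilizer G_{x̄} = { g ∈ G : g·x̄ = x̄ } equals {e}. Then there exist a constant C > 0 and a neighborhood U of x̄ in ℝⁿ such that for all x, y ∈ U, d(T_x(Gx), T_y(Gy)) ≤ C · ‖x − y‖, where T_x(Gx) = Im d(θ^(x))_e is the tangent space to the orbit of x at x. -/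
/-!
Let `A x : E →L[ℝ] ℝⁿ` be the differential at `1` of the orbit map `g ↦ g • x`, so that
`T_x(Gx)` is the range of `A x`. Smoothness of the action makes `x ↦ A x` a `C¹` map, hence
Lipschitz near `x̄`. Freeness at `x̄` makes `A x̄` injective: if `A x̄ v = 0`, equivariance of the
orbit map shows that it is constant along the integral curve through `1` of the left-invariant
vector field generated by `v`; by freeness that curve stays at `1`, so `v = 0`. An injective map
is bounded below, say `‖u‖ ≤ c ‖A x̄ u‖`, and stays bounded below by `2c` after a perturbation of
norm at most `1 / 2c`. Finally, if `A` is bounded below by `c` then every unit vector `A u` of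
`range A` lies within `‖A u - B u‖ ≤ c ‖A - B‖` of `range B`.
-/

open scoped Manifold

/-- The tangent space `T_x(Gx) = Im d(θ^(x))_e` to the orbit of `x`, viewed as a linear
subspace of `ℝⁿ`, where `θ^(x) : G → ℝⁿ, g ↦ θ g x` is the orbit map. -/
noncomputable def orbitTangent
    {E : Type*} [NormedAddCommGroup E] [NormedSpace ℝ E]
    {H : Type*} [TopologicalSpace H] (I : ModelWithCorners ℝ E H)
    {G : Type*} [TopologicalSpace G] [ChartedSpace H G] [Group G]
    {n : ℕ} (θ : G → EuclideanSpace ℝ (Fin n) → EuclideanSpace ℝ (Fin n))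
    (x : EuclideanSpace ℝ (Fin n)) : Submodule ℝ (EuclideanSpace ℝ (Fin n)) :=
  LinearMap.range
    ((show E →L[ℝ] EuclideanSpace ℝ (Fin n) from
      mfderiv I 𝓘(ℝ, EuclideanSpace ℝ (Fin n)) (fun g => θ g x) (1 : G)) : E →ₗ[ℝ] EuclideanSpace ℝ (Fin n))


open Set Filter Topology NNReal

section SubspaceDist

variable {E F : Type*} [NormedAddCommGroup E] [NormedSpace ℝ E] [NormedAddCommGroup F]
  [NormedSpace ℝ F]

theorem subspaceDist_range_le_of_antilipschitzWith {A : E →L[ℝ] F} {c : ℝ≥0}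
    (hA : AntilipschitzWith c A) (B : E →L[ℝ] F) :
    subspaceDist (LinearMap.range (A : E →ₗ[ℝ] F)) (LinearMap.range (B : E →ₗ[ℝ] F)) ≤
      c * ‖A - B‖ := by
  refine Real.sSup_le ?_ (by positivity)
  rintro _ ⟨_, ⟨⟨u, rfl⟩, hu⟩, rfl⟩
  have hAu : ‖A u‖ = 1 := hu
  have hu_le : ‖u‖ ≤ c := by simpa [hAu] using A.bound_of_antilipschitz hA u
  calc Metric.infDist (A u) (LinearMap.range (B : E →ₗ[ℝ] F))
      ≤ dist (A u) (B u) := Metric.infDist_le_dist_of_mem ⟨u, rfl⟩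
    _ ≤ ‖A - B‖ * ‖u‖ := by
        rw [dist_eq_norm, ← ContinuousLinearMap.sub_apply']
        exact (A - B).le_opNorm u
    _ ≤ c * ‖A - B‖ := by rw [mul_comm]; gcongr

theorem ContinuousLinearMap.antilipschitzWith_two_mul_of_norm_sub_le {A₀ A : E →L[ℝ] F}
    {c : ℝ≥0} (hA₀ : AntilipschitzWith c A₀) (h : c * ‖A - A₀‖ ≤ 1 / 2) :
    AntilipschitzWith (2 * c) A := by
  refine A.antilipschitz_of_bound fun u => ?_
  have h₀ := A₀.bound_of_antilipschitz hA₀ u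
  have hdiff : ‖A₀ u‖ ≤ ‖A u‖ + ‖A - A₀‖ * ‖u‖ := by
    calc ‖A₀ u‖ = ‖A u - (A - A₀) u‖ := by simp
      _ ≤ ‖A u‖ + ‖(A - A₀) u‖ := norm_sub_le _ _
      _ ≤ ‖A u‖ + ‖A - A₀‖ * ‖u‖ := by gcongr; exact (A - A₀).le_opNorm u
  push_cast
  nlinarith [norm_nonneg u, c.coe_nonneg]

theorem exists_subspaceDist_range_le_of_lipschitzOnWith [FiniteDimensional ℝ E] {X : Type*}
    [SeminormedAddCommGroup X] {A : X → E →L[ℝ] F} {x₀ : X} {K : ℝ≥0} {t : Set X}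
    (ht : t ∈ 𝓝 x₀) (hA : LipschitzOnWith K A t) (hinj : Function.Injective (A x₀)) :
    ∃ C > (0 : ℝ), ∃ U ∈ 𝓝 x₀, ∀ x ∈ U, ∀ y ∈ U,
      subspaceDist (LinearMap.range (A x : E →ₗ[ℝ] F)) (LinearMap.range (A y : E →ₗ[ℝ] F)) ≤
        C * ‖x - y‖ := by
  obtain ⟨c, hc, hc₀⟩ := LinearMap.exists_antilipschitzWith (A x₀ : E →ₗ[ℝ] F)
    (LinearMap.ker_eq_bot.2 hinj)
  have hnear : ∀ᶠ x in 𝓝 x₀, c * ‖A x - A x₀‖ ≤ 1 / 2 := by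
    have hcont : ContinuousAt A x₀ := hA.continuousOn.continuousAt ht
    filter_upwards [Metric.tendsto_nhds.1 hcont (1 / (2 * c)) (by positivity)] with x hx
    rw [dist_eq_norm] at hx
    calc (c : ℝ) * ‖A x - A x₀‖ ≤ c * (1 / (2 * c)) := by gcongr
      _ = 1 / 2 := by field_simp
  refine ⟨2 * c * K + 1, by positivity, t ∩ {x | c * ‖A x - A x₀‖ ≤ 1 / 2}, inter_mem ht hnear,
    fun x hx y hy => ?_⟩
  calc subspaceDist (LinearMap.range (A x : E →ₗ[ℝ] F)) (LinearMap.range (A y : E →ₗ[ℝ] F))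
      ≤ (2 * c : ℝ≥0) * ‖A x - A y‖ :=
        subspaceDist_range_le_of_antilipschitzWith
          (ContinuousLinearMap.antilipschitzWith_two_mul_of_norm_sub_le hc₀ hx.2) (A y)
    _ ≤ 2 * c * (K * ‖x - y‖) := by
        push_cast
        gcongr
        simpa [dist_eq_norm] using hA.dist_le_mul x hx.1 y hy.1
    _ ≤ (2 * c * K + 1) * ‖x - y‖ := by nlinarith [norm_nonneg (x - y)]

end SubspaceDist

theorem eventuallyEq_const_of_hasFDerivAt_zero {E F : Type*} [NormedAddCommGroup E]
    [NormedSpace ℝ E] [NormedAddCommGroup F] [NormedSpace ℝ F] {f : E → F} {x₀ : E}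
    (hf : ∀ᶠ x in 𝓝 x₀, HasFDerivAt f (0 : E →L[ℝ] F) x) : f =ᶠ[𝓝 x₀] fun _ => f x₀ := by
  obtain ⟨ε, hε, hball⟩ := Metric.eventually_nhds_iff_ball.1 hf
  filter_upwards [Metric.ball_mem_nhds x₀ hε] with x hx
  exact Metric.isOpen_ball.is_const_of_fderiv_eq_zero (convex_ball x₀ ε).isPreconnected
    (fun y hy => (hball y hy).differentiableAt.differentiableWithinAt)
    (fun y hy => (hball y hy).fderiv) hx (Metric.mem_ball_self hε)

section Manifold

variable {E H : Type*} [NormedAddCommGroup E] [NormedSpace ℝ E] [TopologicalSpace H]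
  {I : ModelWithCorners ℝ E H}

theorem ModelWithCorners.exists_isInteriorPoint {M : Type*} [TopologicalSpace M]
    [ChartedSpace H M] {n : WithTop ℕ∞} [IsManifold I n M] (hn : n ≠ 0) (x : M) :
    ∃ y : M, I.IsInteriorPoint y := by
  -- The chart target is a neighbourhood of `extChartAt I x x` within `range I`, and the interior
  -- of `range I` is dense in `range I`.
  obtain ⟨V, hVo, hxV, hV⟩ := mem_nhdsWithin.1 (extChartAt_target_mem_nhdsWithin (I := I) x)
  obtain ⟨q, hqV, hq⟩ := mem_closure_iff_nhds.1
    (I.range_subset_closure_interior (extChartAt_target_subset_range x (mem_extChartAt_target x)))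
    V (hVo.mem_nhds hxV)
  have hqt : q ∈ (extChartAt I x).target := hV ⟨hqV, interior_subset hq⟩
  refine ⟨(extChartAt I x).symm q, (I.isInteriorPoint_iff_of_mem_atlas hn (chart_mem_atlas H x)
    ?_).2 ?_⟩
  · rw [← extChartAt_source I]
    exact (extChartAt I x).map_target hqt
  · rw [← extChartAt, (extChartAt I x).right_inv hqt, mem_interior_iff_mem_nhds]
    exact mem_of_superset (inter_mem (hVo.mem_nhds hqV) (mem_interior_iff_mem_nhds.1 hq)) hV

theorem contDiff_mfderiv_of_contMDiff_uncurry {M F F' : Type*} [TopologicalSpace M]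
    [ChartedSpace H M] [IsManifold I 2 M] [NormedAddCommGroup F] [NormedSpace ℝ F]
    [NormedAddCommGroup F'] [NormedSpace ℝ F'] {f : M → F → F'}
    (hf : ContMDiff (I.prod 𝓘(ℝ, F)) 𝓘(ℝ, F') 2 (fun p : M × F => f p.1 p.2)) {m₀ : M}
    (hm₀ : I.IsInteriorPoint m₀) :
    ContDiff ℝ 1 (fun x => show E →L[ℝ] F' from mfderiv I 𝓘(ℝ, F') (fun m => f m x) m₀) := by
  set χ := extChartAt I m₀
  have hrange : range I ∈ 𝓝 (χ m₀) := range_mem_nhds_isInteriorPoint hm₀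
  have htarget : χ.target ∈ 𝓝 (χ m₀) := by
    rw [← nhdsWithin_eq_nhds.2 hrange]
    exact extChartAt_target_mem_nhdsWithin m₀
  have hchart : ∀ x, mfderiv I 𝓘(ℝ, F') (fun m => f m x) m₀ =
      fderiv ℝ (fun e => f (χ.symm e) x) (χ m₀) := by
    intro x
    have hd : MDifferentiableAt I 𝓘(ℝ, F') (fun m => f m x) m₀ :=
      (hf.comp (contMDiff_id.prodMk contMDiff_const)).mdifferentiable two_ne_zero m₀
    rw [hd.mfderiv, fderivWithin_of_mem_nhds hrange]
    rfl
  have hlocal : ∀ x₀ : F, ContDiffAt ℝ 2 (fun p : F × E => f (χ.symm p.2) p.1) (x₀, χ m₀) := by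
    intro x₀
    have hsymm : ContMDiffAt 𝓘(ℝ, F × E) (I.prod 𝓘(ℝ, F)) 2
        (fun p : F × E => (χ.symm p.2, p.1)) (x₀, χ m₀) :=
      (((contMDiffOn_extChartAt_symm m₀).contMDiffAt htarget).comp (x₀, χ m₀)
        contDiff_snd.contMDiff.contMDiffAt).prodMk contDiff_fst.contMDiff.contMDiffAt
    exact contMDiffAt_iff_contDiffAt.1 (hf.contMDiffAt.comp _ hsymm)
  simp_rw [hchart]
  exact contDiff_iff_contDiffAt.2 fun x₀ =>
    ContDiffAt.fderiv (f := fun x e => f (χ.symm e) x) (hlocal x₀) contDiffAt_const le_rfl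

variable {G : Type*} [TopologicalSpace G] [ChartedSpace H G] [Group G]

theorem LieGroup.boundarylessManifold {n : WithTop ℕ∞} [LieGroup I n G] (hn : n ≠ 0) :
    BoundarylessManifold I G := by
  obtain ⟨y, hy⟩ := I.exists_isInteriorPoint hn (1 : G)
  refine ⟨fun g => ?_⟩
  have hL : ∀ a b : G, MDifferentiableAt I I (a * ·) b := fun a b =>
    contMDiffAt_mul_left.mdifferentiableAt hn
  have hsurj : Function.Surjective (mfderiv I I (g * y⁻¹ * ·) y) := by
    have hcomp : (g * y⁻¹ * ·) ∘ (y * g⁻¹ * ·) = id := by ext; simp [mul_assoc]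
    have h : mfderiv I I ((g * y⁻¹ * ·) ∘ (y * g⁻¹ * ·)) g = ContinuousLinearMap.id ℝ _ := by
      rw [hcomp, mfderiv_id]
    intro v
    refine ⟨mfderiv I I (y * g⁻¹ * ·) g v, ?_⟩
    exact (mfderiv_comp_apply_of_eq g (hL (g * y⁻¹) y) (hL (y * g⁻¹) g) (by group) v).symm.trans
      (congrArg (· v) h)
  simpa using (hL (g * y⁻¹) y).isInteriorPoint_of_surjective_mfderiv hsurj hy

variable {F : Type*} [NormedAddCommGroup F] [NormedSpace ℝ F] {θ : G → F → F}

theorem mfderiv_orbitMap_mulInvariantVectorField [LieGroup I 1 G]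
    (hθ : ContMDiff (I.prod 𝓘(ℝ, F)) 𝓘(ℝ, F) 1 (fun p : G × F => θ p.1 p.2))
    (hmul : ∀ g h x, θ (g * h) x = θ g (θ h x)) (hone : ∀ x, θ 1 x = x)
    (x : F) (g : G) (v : GroupLieAlgebra I G) :
    mfderiv I 𝓘(ℝ, F) (fun h => θ h x) g (mulInvariantVectorField v g) =
      fderiv ℝ (θ g) x (mfderiv I 𝓘(ℝ, F) (fun h => θ h x) 1 v) := by
  have horbit : MDifferentiable I 𝓘(ℝ, F) (fun h => θ h x) :=
    (hθ.comp (contMDiff_id.prodMk contMDiff_const)).mdifferentiable one_ne_zero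
  have hact : Differentiable ℝ (θ g) :=
    ((hθ.comp (contMDiff_const.prodMk contMDiff_id)).mdifferentiable one_ne_zero).differentiable
  have hequiv : (fun h => θ h x) ∘ (g * ·) = θ g ∘ (fun h => θ h x) := by
    ext h; simp [hmul]
  refine (mfderiv_comp_apply_of_eq 1 (horbit g) mdifferentiableAt_mul_left (mul_one g) v).symm.trans
    ?_
  rw [hequiv, mfderiv_comp_apply_of_eq 1 hact.differentiableAt.mdifferentiableAt (horbit 1)
    (hone x), mfderiv_eq_fderiv]
  rfl

theorem injective_mfderiv_orbitMap_of_free [CompleteSpace E] [LieGroup I 3 G]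
    (hθ : ContMDiff (I.prod 𝓘(ℝ, F)) 𝓘(ℝ, F) 1 (fun p : G × F => θ p.1 p.2))
    (hmul : ∀ g h x, θ (g * h) x = θ g (θ h x)) (hone : ∀ x, θ 1 x = x)
    {x : F} (hfree : ∀ g : G, θ g x = x → g = 1) :
    Function.Injective (mfderiv I 𝓘(ℝ, F) (fun g => θ g x) 1) := by
  have : LieGroup I (minSmoothness ℝ 3) G := LieGroup.of_le (n := 3) (by simp)
  have : LieGroup I 1 G := LieGroup.of_le (n := 3) (by norm_num)
  have : BoundarylessManifold I G := LieGroup.boundarylessManifold (n := 3) (by simp)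
  refine (injective_iff_map_eq_zero _).2 fun v hv => ?_
  obtain ⟨γ, hγ0, hγ⟩ := exists_isMIntegralCurveAt_of_contMDiffAt_boundaryless (t₀ := 0)
    ((contMDiffAt_mulInvariantVectorField (g := 1) v).of_le (by simp))
  have hflat : ∀ᶠ t in 𝓝 (0 : ℝ), HasFDerivAt (fun t => θ (γ t) x) (0 : ℝ →L[ℝ] F) t := by
    filter_upwards [hγ] with t ht
    have horbit : MDifferentiableAt I 𝓘(ℝ, F) (fun h => θ h x) (γ t) :=
      ((hθ.comp (contMDiff_id.prodMk contMDiff_const)).mdifferentiable one_ne_zero) _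
    have hzero : (mfderiv I 𝓘(ℝ, F) (fun h => θ h x) (γ t)).comp
        ((1 : ℝ →L[ℝ] ℝ).smulRight (mulInvariantVectorField v (γ t))) = 0 := by
      ext
      simp only [ContinuousLinearMap.comp_apply, ContinuousLinearMap.smulRight_apply,
        one_apply_eq_self, one_smul, mfderiv_orbitMap_mulInvariantVectorField hθ hmul hone, hv]
      exact map_zero _
    exact hasMFDerivAt_iff_hasFDerivAt.1 ((horbit.hasMFDerivAt.comp t ht).congr_mfderiv hzero)
  have hγ1 : γ =ᶠ[𝓝 0] fun _ => 1 := by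
    filter_upwards [eventuallyEq_const_of_hasFDerivAt_zero hflat] with t ht
    exact hfree _ (by simpa [hγ0, hone] using ht)
  have hderiv := hγ.self_of_nhds.mfderiv
  rw [hγ1.mfderiv_eq, mfderiv_const, hγ0] at hderiv
  have hV1 : mulInvariantVectorField v 1 = v := by
    have hid : (fun h : G => 1 * h) = id := funext one_mul
    rw [mulInvariantVectorField, hid, mfderiv_id]
    rfl
  rw [← one_smul ℝ v, ← hV1]
  exact congrArg (· 1) hderiv.symm

end Manifold

theorem stmt_4 {n : ℕ}
    {E : Type*} [NormedAddCommGroup E] [NormedSpace ℝ E] [FiniteDimensional ℝ E]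
    {H : Type*} [TopologicalSpace H] {I : ModelWithCorners ℝ E H}
    {G : Type*} [TopologicalSpace G] [ChartedSpace H G] [Group G] [LieGroup I (⊤ : ℕ∞) G]
    (θ : G → EuclideanSpace ℝ (Fin n) → EuclideanSpace ℝ (Fin n))
    (hsmooth : ContMDiff (I.prod 𝓘(ℝ, EuclideanSpace ℝ (Fin n)))
      𝓘(ℝ, EuclideanSpace ℝ (Fin n)) (⊤ : ℕ∞) (fun p : G × EuclideanSpace ℝ (Fin n) => θ p.1 p.2))
    (hmul : ∀ g h x, θ (g * h) x = θ g (θ h x))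
    (hone : ∀ x, θ 1 x = x)
    (xbar : EuclideanSpace ℝ (Fin n))
    (hfree : ∀ g : G, θ g xbar = xbar → g = 1) :
    ∃ C > (0 : ℝ), ∃ U ∈ nhds xbar, ∀ x ∈ U, ∀ y ∈ U,
      subspaceDist (orbitTangent I θ x) (orbitTangent I θ y) ≤ C * ‖x - y‖ := by
  have : BoundarylessManifold I G := LieGroup.boundarylessManifold (n := (⊤ : ℕ∞)) (by simp)
  have hinj := injective_mfderiv_orbitMap_of_free (hsmooth.of_le ENat.LEInfty.out) hmul hone hfree
  have hC1 := contDiff_mfderiv_of_contMDiff_uncurry (hsmooth.of_le ENat.LEInfty.out)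
    (BoundarylessManifold.isInteriorPoint (x := (1 : G)))
  obtain ⟨K, t, ht, hlip⟩ := (hC1.contDiffAt (x := xbar)).exists_lipschitzOnWith
  exact exists_subspaceDist_range_le_of_lipschitzOnWith ht hlip hinj
end

section
/- Let f : ℝⁿ → ℝ be differentiable, let B be a symmetric n×n real matrix, and let γ : ℝ → ℝ^{n×n} be a matrix-valued curve differentiable at 0 with γ(0) = I (the identity matrix), γ'(0) = B, and f(γ(t)·x) = f(x) for all x ∈ ℝⁿ and all t in a neighborhood of 0 (where γ(t)·x denotes matrix–vector multiplication). If x : ℝ → ℝⁿ is differentiable and satisfies the gradient flow equation x'(t) = −∇f(x(t)) for all t ∈ ℝ, then the function t ↦ ⟨x(t), B·x(t)⟩ is constant. -/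
open scoped RealInnerProductSpace Matrix

attribute [local instance] Matrix.frobeniusNormedAddCommGroup Matrix.frobeniusNormedSpace

open Filter Topology Matrix

/-! Differentiating the invariance `f (γ t • y) = f y` at `t = 0` gives `⟪∇f y, B y⟫ = 0` for
every `y`. Since `B` is symmetric, along the gradient flow `d/dt ⟪x, B x⟫ = 2 ⟪x', B x⟫ =
-2 ⟪∇f x, B x⟫ = 0`. -/

theorem HasDerivAt.fderiv_apply_eq_zero_of_eventuallyEq_const {E F : Type*}
    [NormedAddCommGroup E] [NormedSpace ℝ E] [NormedAddCommGroup F] [NormedSpace ℝ F]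
    {f : E → F} {c : ℝ → E} {v y : E} (hc : HasDerivAt c v 0) (hc0 : c 0 = y)
    (hf : DifferentiableAt ℝ f y) (hconst : ∀ᶠ t in 𝓝 0, f (c t) = f y) :
    fderiv ℝ f y v = 0 := by
  subst hc0
  have hderiv : HasDerivAt (fun t => f (c t)) (fderiv ℝ f (c 0) v) 0 :=
    hf.hasFDerivAt.comp_hasDerivAt 0 hc
  exact hderiv.unique <| (hasDerivAt_const 0 (f (c 0))).congr_of_eventuallyEq hconst

section Matrix

variable {ι : Type*} [Fintype ι] [DecidableEq ι]

theorem Matrix.hasDerivAt_toEuclideanCLM_apply {γ : ℝ → Matrix ι ι ℝ} {B : Matrix ι ι ℝ} {t : ℝ}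
    (hγ : HasDerivAt γ B t) (y : EuclideanSpace ℝ ι) :
    HasDerivAt (fun s => toEuclideanCLM (𝕜 := ℝ) (γ s) y) (toEuclideanCLM (𝕜 := ℝ) B y) t :=
  (LinearMap.toContinuousLinearMap
    (LinearMap.applyₗ y ∘ₗ (toEuclideanLin : Matrix ι ι ℝ ≃ₗ[ℝ] _).toLinearMap)).hasFDerivAt
    |>.comp_hasDerivAt t hγ

theorem Matrix.inner_gradient_toEuclideanCLM_eq_zero {f : EuclideanSpace ℝ ι → ℝ}
    {y : EuclideanSpace ℝ ι} (hf : DifferentiableAt ℝ f y) {γ : ℝ → Matrix ι ι ℝ}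
    {B : Matrix ι ι ℝ} (hγ0 : γ 0 = 1) (hγ' : HasDerivAt γ B 0)
    (hinv : ∀ᶠ t in 𝓝 0, f (toEuclideanCLM (𝕜 := ℝ) (γ t) y) = f y) :
    ⟪gradient f y, toEuclideanCLM (𝕜 := ℝ) B y⟫ = 0 := by
  rw [← InnerProductSpace.toDual_apply_apply, ← hf.hasGradientAt.hasFDerivAt.fderiv]
  exact (hasDerivAt_toEuclideanCLM_apply hγ' y).fderiv_apply_eq_zero_of_eventuallyEq_const
    (by simp [hγ0]) hf hinv

end Matrix

theorem LinearMap.IsSymmetric.hasDerivAt_inner_apply {E : Type*} [NormedAddCommGroup E]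
    [InnerProductSpace ℝ E] {T : E →L[ℝ] E} (hT : (T : E →ₗ[ℝ] E).IsSymmetric) {x : ℝ → E}
    {x' : E} {t : ℝ} (hx : HasDerivAt x x' t) :
    HasDerivAt (fun s => ⟪x s, T (x s)⟫) (2 * ⟪x', T (x t)⟫) t := by
  have hsymm : ⟪T x', x t⟫ = ⟪x', T (x t)⟫ := hT x' (x t)
  refine (hx.inner ℝ (T.hasFDerivAt.comp_hasDerivAt t hx)).congr_deriv ?_
  rw [real_inner_comm, hsymm, Function.comp_apply]
  ring

theorem LinearMap.IsSymmetric.inner_apply_const_of_gradient_flow {E : Type*}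
    [NormedAddCommGroup E] [InnerProductSpace ℝ E] [CompleteSpace E] {f : E → ℝ}
    {T : E →L[ℝ] E} (hT : (T : E →ₗ[ℝ] E).IsSymmetric) (horth : ∀ y, ⟪gradient f y, T y⟫ = 0)
    {x : ℝ → E} (hx : ∀ t, HasDerivAt x (-gradient f (x t)) t) (s t : ℝ) :
    ⟪x s, T (x s)⟫ = ⟪x t, T (x t)⟫ := by
  have hderiv : ∀ u, HasDerivAt (fun s => ⟪x s, T (x s)⟫) 0 u := fun u => by
    simpa [horth] using hT.hasDerivAt_inner_apply (hx u)
  exact is_const_of_deriv_eq_zero (fun u => (hderiv u).differentiableAt)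
    (fun u => (hderiv u).deriv) s t

theorem stmt_10 {n : ℕ}
    (f : EuclideanSpace ℝ (Fin n) → ℝ) (hf : Differentiable ℝ f)
    (B : Matrix (Fin n) (Fin n) ℝ) (hB : Bᵀ = B)
    (γ : ℝ → Matrix (Fin n) (Fin n) ℝ) (hγ0 : γ 0 = 1) (hγ' : HasDerivAt γ B 0)
    (hinv : ∀ x : EuclideanSpace ℝ (Fin n), ∀ᶠ t in nhds (0 : ℝ),
      f (WithLp.toLp 2 ((γ t).mulVec x : Fin n → ℝ) : EuclideanSpace ℝ (Fin n)) = f x)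
    (x : ℝ → EuclideanSpace ℝ (Fin n))
    (hx : ∀ t, HasDerivAt x (-(gradient f (x t))) t) :
    ∀ s t : ℝ, ⟪x s, (WithLp.toLp 2 (B.mulVec (x s) : Fin n → ℝ) : EuclideanSpace ℝ (Fin n))⟫ =
      ⟪x t, (WithLp.toLp 2 (B.mulVec (x t) : Fin n → ℝ) : EuclideanSpace ℝ (Fin n))⟫ := by
  have hsymm : (toEuclideanCLM (𝕜 := ℝ) B : EuclideanSpace ℝ (Fin n) →ₗ[ℝ] _).IsSymmetric := by
    rw [coe_toEuclideanCLM_eq_toEuclideanLin, isSymmetric_toEuclideanLin_iff, IsHermitian,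
      conjTranspose_eq_transpose_of_trivial, hB]
  exact hsymm.inner_apply_const_of_gradient_flow
    (fun y => inner_gradient_toEuclideanCLM_eq_zero (hf y) hγ0 hγ' (hinv y)) hx
end

section
/- Let n ≥ 2 and define f : ℝⁿ → ℝ by f(x) = (x₁² + x₂² + ⋯ + x_{n−1}² − x_n² − 1)². If x : ℝ → ℝⁿ is differentiable and satisfies the gradient flow equation x'(t) = −∇f(x(t)) for all t ∈ ℝ, then for each index i ∈ {1, …, n−1} the function t ↦ x_i(t) · x_n(t) is constant. -/
/-! With `D = diag ε`, `ε = (1, …, 1, -1)`, and the Lorentz form `q x = ⟪D x, x⟫`, we have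
`f = (q - 1)²`, whose gradient is `4 (q x - 1) • D x`. Along the flow every coordinate therefore satisfies
`x_j' = -c(t) ε_j x_j` with one scalar `c(t)` common to all coordinates, and since
`ε_i = 1 = -ε_n` for `i < n`, the two terms of `(x_i x_n)'` cancel. -/

section Gradient

variable {F : Type*} [NormedAddCommGroup F] [InnerProductSpace ℝ F] [CompleteSpace F]

theorem HasDerivAt.comp_hasGradientAt {φ : ℝ → ℝ} {φ' : ℝ} {g : F → ℝ} {g' x : F}
    (hφ : HasDerivAt φ φ' (g x)) (hg : HasGradientAt g g' x) :
    HasGradientAt (φ ∘ g) (φ' • g') x := by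
  rw [hasGradientAt_iff_hasFDerivAt] at hg ⊢
  refine (hφ.comp_hasFDerivAt x hg).congr_fderiv ?_
  rw [map_smulₛₗ, conj_trivial]

theorem LinearMap.IsSymmetric.hasGradientAt_reApplyInnerSelf {T : F →L[ℝ] F}
    (hT : (T : F →ₗ[ℝ] F).IsSymmetric) (x : F) :
    HasGradientAt T.reApplyInnerSelf (2 • T x) x := by
  rw [hasGradientAt_iff_hasFDerivAt, map_nsmul]
  exact (hT.hasStrictFDerivAt_reApplyInnerSelf x).hasFDerivAt

end Gradient

section Diagonal

variable {ι : Type*} [Fintype ι] [DecidableEq ι] (ε : ι → ℝ)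

noncomputable abbrev diagonalCLM : EuclideanSpace ℝ ι →L[ℝ] EuclideanSpace ℝ ι :=
  Matrix.toEuclideanCLM (𝕜 := ℝ) (Matrix.diagonal ε)

theorem diagonalCLM_apply (y : EuclideanSpace ℝ ι) (j : ι) :
    diagonalCLM ε y j = ε j * y j := by
  simp [Matrix.mulVec_diagonal]

theorem isSymmetric_diagonalCLM :
    (diagonalCLM ε : EuclideanSpace ℝ ι →ₗ[ℝ] EuclideanSpace ℝ ι).IsSymmetric := by
  rw [Matrix.coe_toEuclideanCLM_eq_toEuclideanLin, Matrix.isSymmetric_toEuclideanLin_iff]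
  exact Matrix.isHermitian_diagonal ε

theorem reApplyInnerSelf_diagonalCLM (y : EuclideanSpace ℝ ι) :
    (diagonalCLM ε).reApplyInnerSelf y = ∑ j, ε j * y j ^ 2 := by
  simp only [ContinuousLinearMap.reApplyInnerSelf_apply, PiLp.inner_apply, diagonalCLM_apply,
    RCLike.re_to_real, Real.inner_apply]
  exact Finset.sum_congr rfl fun j _ => by ring

end Diagonal

theorem mul_eq_of_hasDerivAt_neg_mul {u v c : ℝ → ℝ}
    (hu : ∀ t, HasDerivAt u (-(c t * u t)) t) (hv : ∀ t, HasDerivAt v (c t * v t) t)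
    (s t : ℝ) : u s * v s = u t * v t := by
  have h : ∀ t, HasDerivAt (fun t => u t * v t) 0 t := fun t =>
    ((hu t).mul (hv t)).congr_deriv (by ring)
  exact is_const_of_deriv_eq_zero (fun t => (h t).differentiableAt) (fun t => (h t).deriv) s t

theorem HasDerivAt.euclideanSpace_apply {ι : Type*} [Fintype ι] {x : ℝ → EuclideanSpace ℝ ι}
    {x' : EuclideanSpace ℝ ι} {t : ℝ} (hx : HasDerivAt x x' t) (j : ι) :
    HasDerivAt (fun t => x t j) (x' j) t :=
  (EuclideanSpace.proj j : EuclideanSpace ℝ ι →L[ℝ] ℝ).hasFDerivAt.comp_hasDerivAt t hx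

/-- Conserved quantities for the gradient flow of the Lorentz-group–invariant function
`f(x) = (x₁² + ⋯ + x_{n−1}² − x_n² − 1)²`: each product `x_i(t) · x_n(t)` (for
`i ∈ {1, …, n−1}`) is constant along any gradient trajectory. -/
theorem stmt_11 {n : ℕ} (hn : 2 ≤ n)
    (f : EuclideanSpace ℝ (Fin n) → ℝ)
    (hf : ∀ x : EuclideanSpace ℝ (Fin n),
      f x = ((∑ i : Fin n, if (i : ℕ) < n - 1 then (x i) ^ 2 else -(x i) ^ 2) - 1) ^ 2)
    (x : ℝ → EuclideanSpace ℝ (Fin n))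
    (hx : ∀ t, HasDerivAt x (-(gradient f (x t))) t) :
    ∀ i : Fin n, (i : ℕ) < n - 1 → ∀ s t : ℝ,
      x s i * x s ⟨n - 1, by omega⟩ = x t i * x t ⟨n - 1, by omega⟩ := by
  intro i hi s t
  let ε : Fin n → ℝ := fun j => if (j : ℕ) < n - 1 then 1 else -1
  let q := (diagonalCLM ε).reApplyInnerSelf
  have hf_comp : f = (fun r => (r - 1) ^ 2) ∘ q := by
    funext y
    rw [hf, Function.comp_apply, show q y = _ from reApplyInnerSelf_diagonalCLM ε y]
    congr 2
    refine Finset.sum_congr rfl fun j _ => ?_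
    split_ifs <;> simp [ε, *]
  have hgrad : ∀ y, gradient f y = (2 * (q y - 1)) • 2 • diagonalCLM ε y := fun y => by
    have hφ : HasDerivAt (fun r : ℝ => (r - 1) ^ 2) (2 * (q y - 1)) (q y) := by
      simpa using ((hasDerivAt_id (q y)).sub_const 1).fun_pow 2
    rw [hf_comp]
    exact (hφ.comp_hasGradientAt
      ((isSymmetric_diagonalCLM ε).hasGradientAt_reApplyInnerSelf y)).gradient
  let c t := 4 * (q (x t) - 1)
  have hcoord : ∀ j t, HasDerivAt (fun t => x t j) (-(c t * (ε j * x t j))) t := fun j t => by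
    refine ((hx t).euclideanSpace_apply j).congr_deriv ?_
    simp only [hgrad, PiLp.neg_apply, PiLp.smul_apply, diagonalCLM_apply, c]
    ring
  refine mul_eq_of_hasDerivAt_neg_mul (u := fun t => x t i) (v := fun t => x t ⟨n - 1, by omega⟩)
    (c := c) (fun t => ?_) (fun t => ?_) s t
  · simpa [ε, hi] using hcoord i t
  · simpa [ε] using hcoord ⟨n - 1, by omega⟩ t
end

section
/- Let M be a real m×n matrix, and let X : ℝ → ℝ^{m×r} and Y : ℝ → ℝ^{r×n} be differentiable matrix-valued curves satisfying X'(t) = −2(X(t)Y(t) − M)Y(t)ᵀ and Y'(t) = −2X(t)ᵀ(X(t)Y(t) − M) for all t ∈ ℝ (this is the negative gradient flow of f(X,Y) = ‖XY − M‖_F² with respect to the Frobenius inner product). Then the function t ↦ X(t)ᵀX(t) − Y(t)Y(t)ᵀ is constant. -/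
open scoped Matrix

attribute [local instance] Matrix.frobeniusNormedAddCommGroup Matrix.frobeniusNormedSpace

section MatrixCalculus

variable {𝕜 : Type*} [RCLike 𝕜] {l m n : Type*} [Fintype l] [Fintype m] [Fintype n]

theorem Matrix.isBoundedBilinearMap_mul :
    IsBoundedBilinearMap 𝕜 fun p : Matrix l m 𝕜 × Matrix m n 𝕜 => p.1 * p.2 where
  add_left := Matrix.add_mul
  smul_left c A B := Matrix.smul_mul c A B
  add_right := Matrix.mul_add
  smul_right c A B := Matrix.mul_smul A c B
  bound := ⟨1, one_pos, fun A B => by simpa using Matrix.frobenius_norm_mul A B⟩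

theorem HasDerivAt.matrix_mul {A : 𝕜 → Matrix l m 𝕜} {B : 𝕜 → Matrix m n 𝕜}
    {A' : Matrix l m 𝕜} {B' : Matrix m n 𝕜} {t : 𝕜}
    (hA : HasDerivAt A A' t) (hB : HasDerivAt B B' t) :
    HasDerivAt (fun t => A t * B t) (A' * B t + A t * B') t := by
  have h := (Matrix.isBoundedBilinearMap_mul.hasFDerivAt (A t, B t)).comp_hasDerivAt t
    (hA.prodMk hB)
  simp only [IsBoundedBilinearMap.deriv_apply, add_comm] at h
  exact h

theorem HasDerivAt.matrix_transpose {A : 𝕜 → Matrix m n 𝕜} {A' : Matrix m n 𝕜} {t : 𝕜}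
    (hA : HasDerivAt A A' t) : HasDerivAt (fun t => (A t)ᵀ) A'ᵀ t :=
  (Matrix.transposeLinearEquiv m n 𝕜 𝕜).toLinearMap.toContinuousLinearMap.hasFDerivAt
    |>.comp_hasDerivAt t hA

/-- The cross terms cancel: `X'ᵀ X = Y Rᵀ X = Y Y'ᵀ` and `Xᵀ X' = Xᵀ R Yᵀ = Y' Yᵀ`. -/
theorem hasDerivAt_transpose_mul_self_sub_mul_transpose_zero
    {X : 𝕜 → Matrix l m 𝕜} {Y : 𝕜 → Matrix m n 𝕜} {R : Matrix l n 𝕜} {t : 𝕜}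
    (hX : HasDerivAt X (R * (Y t)ᵀ) t) (hY : HasDerivAt Y ((X t)ᵀ * R) t) :
    HasDerivAt (fun t => (X t)ᵀ * X t - Y t * (Y t)ᵀ) 0 t := by
  refine (hX.matrix_transpose.matrix_mul hX |>.sub <| hY.matrix_mul hY.matrix_transpose)
    |>.congr_deriv ?_
  simp only [Matrix.transpose_mul, Matrix.transpose_transpose, Matrix.mul_assoc]
  abel

end MatrixCalculus

/-- Conservation law for the negative gradient flow of `f(X,Y) = ‖XY − M‖_F²`:
the quantity `XᵀX − YYᵀ` is constant along trajectories. -/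
theorem stmt_12 {m n r : ℕ} (M : Matrix (Fin m) (Fin n) ℝ)
    (X : ℝ → Matrix (Fin m) (Fin r) ℝ) (Y : ℝ → Matrix (Fin r) (Fin n) ℝ)
    (hX : ∀ t, HasDerivAt X (-((2 : ℝ) • ((X t * Y t - M) * (Y t)ᵀ))) t)
    (hY : ∀ t, HasDerivAt Y (-((2 : ℝ) • ((X t)ᵀ * (X t * Y t - M)))) t) :
    ∀ s t : ℝ, (X s)ᵀ * X s - Y s * (Y s)ᵀ = (X t)ᵀ * X t - Y t * (Y t)ᵀ := by
  have hconst : ∀ t, HasDerivAt (fun t => (X t)ᵀ * X t - Y t * (Y t)ᵀ) 0 t := fun t =>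
    hasDerivAt_transpose_mul_self_sub_mul_transpose_zero (R := -((2 : ℝ) • (X t * Y t - M)))
      ((hX t).congr_deriv (by rw [Matrix.neg_mul, Matrix.smul_mul]))
      ((hY t).congr_deriv (by rw [Matrix.mul_neg, Matrix.mul_smul]))
  exact is_const_of_deriv_eq_zero (fun t => (hconst t).differentiableAt) (fun t => (hconst t).deriv)
end
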